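/- Fix P ≥ 1, widths m^0,…,m^P ∈ ℕ with m^{−1} := d, constants C1 > 0, C3^0,…,C3^P > 0, angles θ^0,…,θ^P ∈ [0, π/2], L > 0, and an L-Lipschitz function h : ℝ → ℝ. For p = 0,…,P let W^p ∈ ℝ^{m^{p−1} × m^p} be a matrix whose columns are nonzero, have ℓ₂ norm at most C3^p, and have pairwise nonobtuse angles at least θ^p. For x ∈ ℝ^d define v^0(x) = (W^0)ᵀ x and v^p(x) = (W^p)ᵀ (h∘v^{p−1}(x)) for p = 1,…,P, where h∘ denotes coordinatewise application. Define J^0 = C1² ((m^0−1)cos θ^0 + 1) and, for p = 1,…,P, J^p = (C3^p)² ((m^p−1)cos θ^p + 1) L² J^{p−1} + 2 (C3^p)² L |h(0)| √(m^{p−1}) ((m^p−1)cos θ^p + 1) √(J^{p−1}) + (C3^p)² ((m^p−1)cos θ^p + 1) m^{p−1} h(0)². Then for every x ∈ ℝ^d with ‖x‖₂ ≤ C1 and every p = 0,…,P, one has ‖v^p(x)‖₂² ≤ J^p. -/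

import Mathlib

/-!
If the columns `c_j` of a layer matrix have norm at most `C` and pairwise `|cos| ≤ cos θ`, then
bounding the Gram entries by `C²` on the diagonal and `C² cos θ` off it, together with
`(∑ |a_j|)² ≤ m ‖a‖²`, gives `‖∑ a_j c_j‖² ≤ C²((m-1) cos θ + 1) ‖a‖²`; by duality the same
constant bounds `‖Wᵀ z‖² / ‖z‖²`. The activation satisfies `‖h ∘ y‖ ≤ L ‖y‖ + |h 0| √k`, and
squaring this at the inductive bound `‖v^p‖ ≤ √J^p` gives exactly the recursion defining `J^{p+1}`.
-/

open RealInnerProductSpace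

/-- The nonobtuse angle `ρ(u,v) = arccos(|⟨u,v⟫| / (‖u‖‖v‖))` between two vectors. -/
noncomputable def rho {E : Type*} [NormedAddCommGroup E] [InnerProductSpace ℝ E]
    (u v : E) : ℝ :=
  Real.arccos (|⟪u, v⟫| / (‖u‖ * ‖v‖))

/-- The `j`-th column of a matrix, viewed as a vector of Euclidean space. -/
def colE {k m : ℕ} (W : Matrix (Fin k) (Fin m) ℝ) (j : Fin m) : EuclideanSpace ℝ (Fin k) :=
  WithLp.toLp 2 (fun i => W i j)

theorem abs_inner_le_cos_mul_of_le_rho {E : Type*} [NormedAddCommGroup E]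
    [InnerProductSpace ℝ E] {u v : E} {θ : ℝ} (hθ : 0 ≤ θ) (hρ : θ ≤ rho u v) :
    |⟪u, v⟫| ≤ Real.cos θ * (‖u‖ * ‖v‖) := by
  unfold rho at hρ
  rcases (mul_nonneg (norm_nonneg u) (norm_nonneg v)).eq_or_lt with huv | huv
  · rcases mul_eq_zero.1 huv.symm with hu | hv
    · simp [norm_eq_zero.1 hu]
    · simp [norm_eq_zero.1 hv]
  have hcos := Real.cos_le_cos_of_nonneg_of_le_pi hθ (Real.arccos_le_pi _) hρ
  rw [Real.cos_arccos (by linarith [div_nonneg (abs_nonneg ⟪u, v⟫) huv.le])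
    ((div_le_one huv).2 (abs_real_inner_le_norm u v)), div_le_iff₀ huv] at hcos
  exact hcos

section Frame

variable {E : Type*} [NormedAddCommGroup E] [InnerProductSpace ℝ E]
  {ι : Type*} [Fintype ι] {c : ι → E}

theorem norm_sum_smul_sq_le_of_abs_inner_le {C γ : ℝ} (hγ : 0 ≤ γ) (hc : ∀ j, ‖c j‖ ≤ C)
    (hcc : ∀ j l, j ≠ l → |⟪c j, c l⟫| ≤ γ * C ^ 2) (a : ι → ℝ) :
    ‖∑ j, a j • c j‖ ^ 2 ≤ C ^ 2 * ((Fintype.card ι - 1) * γ + 1) * ∑ j, a j ^ 2 := by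
  classical
  have hC : ∀ j l, |⟪c j, c l⟫| ≤ γ * C ^ 2 + if j = l then (1 - γ) * C ^ 2 else 0 := by
    intro j l
    split_ifs with hjl
    · subst hjl
      have := hc j
      rw [real_inner_self_eq_norm_sq, abs_of_nonneg (sq_nonneg _)]
      nlinarith [norm_nonneg (c j)]
    · simpa using hcc j l hjl
  have hsum : (∑ j, |a j|) ^ 2 ≤ Fintype.card ι * ∑ j, a j ^ 2 := by
    simpa using sq_sum_le_card_mul_sum_sq (s := Finset.univ) (f := fun j => |a j|)
  calc ‖∑ j, a j • c j‖ ^ 2 = ∑ j, ∑ l, a j * a l * ⟪c j, c l⟫ := by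
        rw [← real_inner_self_eq_norm_sq, sum_inner]
        simp only [real_inner_smul_left, inner_sum, real_inner_smul_right]
        exact Finset.sum_congr rfl fun j _ => Finset.sum_congr rfl fun l _ => by ring
    _ ≤ ∑ j, ∑ l, |a j| * |a l| * (γ * C ^ 2 + if j = l then (1 - γ) * C ^ 2 else 0) := by
        refine Finset.sum_le_sum fun j _ => Finset.sum_le_sum fun l _ => ?_
        calc a j * a l * ⟪c j, c l⟫ ≤ |a j * a l * ⟪c j, c l⟫| := le_abs_self _
          _ ≤ _ := by rw [abs_mul, abs_mul]; gcongr; exact hC j l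
    _ = γ * C ^ 2 * (∑ j, |a j|) ^ 2 + (1 - γ) * C ^ 2 * ∑ j, a j ^ 2 := by
        have hrow : ∀ j, ∑ l, |a j| * |a l| * (γ * C ^ 2 + if j = l then (1 - γ) * C ^ 2 else 0)
            = γ * C ^ 2 * |a j| * ∑ l, |a l| + (1 - γ) * C ^ 2 * a j ^ 2 := by
          intro j
          simp only [mul_add, Finset.sum_add_distrib, mul_ite, mul_zero, Finset.sum_ite_eq,
            Finset.mem_univ, if_true, Finset.mul_sum, abs_mul_abs_self, sq]
          exact congrArg₂ _ (Finset.sum_congr rfl fun l _ => by ring) (by ring)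
        rw [Finset.sum_congr rfl fun j _ => hrow j, Finset.sum_add_distrib, ← Finset.sum_mul,
          ← Finset.mul_sum, ← Finset.mul_sum]
        ring
    _ ≤ C ^ 2 * ((Fintype.card ι - 1) * γ + 1) * ∑ j, a j ^ 2 := by
        nlinarith [mul_le_mul_of_nonneg_left hsum (mul_nonneg hγ (sq_nonneg C))]

theorem sum_inner_sq_le_of_norm_sum_smul_sq_le {K : ℝ} (hK : 0 ≤ K)
    (hc : ∀ a : ι → ℝ, ‖∑ j, a j • c j‖ ^ 2 ≤ K * ∑ j, a j ^ 2) (z : E) :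
    ∑ j, ⟪c j, z⟫ ^ 2 ≤ K * ‖z‖ ^ 2 := by
  set S := ∑ j, ⟪c j, z⟫ ^ 2
  set u := ∑ j, ⟪c j, z⟫ • c j
  have hSu : S ≤ ‖u‖ * ‖z‖ := by
    have hS : S = ⟪u, z⟫ := by simp only [S, u, sum_inner, real_inner_smul_left, sq]
    exact hS ▸ real_inner_le_norm u z
  have hS0 : 0 ≤ S := Finset.sum_nonneg fun j _ => sq_nonneg _
  have hS2 : S * S ≤ S * (K * ‖z‖ ^ 2) := calc
    S * S ≤ ‖u‖ ^ 2 * ‖z‖ ^ 2 := by rw [← mul_pow]; nlinarith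
    _ ≤ K * S * ‖z‖ ^ 2 := by gcongr; exact hc _
    _ = S * (K * ‖z‖ ^ 2) := by ring
  rcases hS0.eq_or_lt with hS | hS
  · rw [← hS]; positivity
  · exact le_of_mul_le_mul_left hS2 hS

end Frame

theorem inner_colE {k m : ℕ} (W : Matrix (Fin k) (Fin m) ℝ) (j : Fin m)
    (z : EuclideanSpace ℝ (Fin k)) : ⟪colE W j, z⟫ = ∑ i, W i j * z i := by
  simp [colE, PiLp.inner_apply, mul_comm]

theorem cast_sub_one_mul_cos_add_one_nonneg (m : ℕ) {θ : ℝ}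
    (hθ : θ ∈ Set.Icc 0 (Real.pi / 2)) : 0 ≤ ((m : ℝ) - 1) * Real.cos θ + 1 := by
  have hcos : 0 ≤ Real.cos θ := Real.cos_nonneg_of_mem_Icc ⟨by linarith [hθ.1, Real.pi_pos], hθ.2⟩
  rcases m.eq_zero_or_pos with rfl | hm
  · simpa using Real.cos_le_one θ
  · have : (1 : ℝ) ≤ m := by exact_mod_cast hm
    nlinarith

theorem norm_sq_le_of_forall_le_rho {k m : ℕ} {W : Matrix (Fin k) (Fin m) ℝ} {C θ : ℝ}
    (hθ : θ ∈ Set.Icc 0 (Real.pi / 2)) (hn : ∀ j, ‖colE W j‖ ≤ C)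
    (hang : ∀ j l, j ≠ l → θ ≤ rho (colE W j) (colE W l))
    {z : EuclideanSpace ℝ (Fin k)} {w : EuclideanSpace ℝ (Fin m)}
    (hw : ∀ j, w j = ∑ i, W i j * z i) :
    ‖w‖ ^ 2 ≤ C ^ 2 * (((m : ℝ) - 1) * Real.cos θ + 1) * ‖z‖ ^ 2 := by
  have hcos : 0 ≤ Real.cos θ := Real.cos_nonneg_of_mem_Icc ⟨by linarith [hθ.1, Real.pi_pos], hθ.2⟩
  have hinner : ∀ j l, j ≠ l → |⟪colE W j, colE W l⟫| ≤ Real.cos θ * C ^ 2 := fun j l hjl =>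
    (abs_inner_le_cos_mul_of_le_rho hθ.1 (hang j l hjl)).trans <| by
      rw [sq]; gcongr
      exacts [(norm_nonneg _).trans (hn j), hn j, hn l]
  rw [EuclideanSpace.real_norm_sq_eq]
  simp only [hw, ← inner_colE]
  refine sum_inner_sq_le_of_norm_sum_smul_sq_le
    (mul_nonneg (sq_nonneg C) (cast_sub_one_mul_cos_add_one_nonneg m hθ)) (fun a => ?_) z
  simpa using norm_sum_smul_sq_le_of_abs_inner_le hcos hn hinner a

theorem LipschitzWith.norm_toLp_comp_le {ι : Type*} [Fintype ι] {K : NNReal} {h : ℝ → ℝ}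
    (hh : LipschitzWith K h) (y : EuclideanSpace ℝ ι) :
    ‖(WithLp.toLp 2 fun i => h (y i) : EuclideanSpace ℝ ι)‖
      ≤ K * ‖y‖ + |h 0| * √(Fintype.card ι) := by
  set hy : EuclideanSpace ℝ ι := WithLp.toLp 2 fun i => h (y i)
  set h0 : EuclideanSpace ℝ ι := WithLp.toLp 2 fun _ => h 0
  have hdiff : ‖hy - h0‖ ≤ K * ‖y‖ := by
    refine (pow_le_pow_iff_left₀ (norm_nonneg _) (by positivity) two_ne_zero).1 ?_
    rw [mul_pow, EuclideanSpace.real_norm_sq_eq, EuclideanSpace.real_norm_sq_eq, Finset.mul_sum]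
    refine Finset.sum_le_sum fun i _ => ?_
    have := hh.dist_le_mul (y i) 0
    rw [Real.dist_eq, Real.dist_eq, sub_zero] at this
    rw [← mul_pow, ← sq_abs, ← sq_abs (_ * y i), abs_mul, NNReal.abs_eq]
    exact pow_le_pow_left₀ (abs_nonneg _) this 2
  have hconst : ‖h0‖ = |h 0| * √(Fintype.card ι) := by
    rw [EuclideanSpace.norm_eq]
    simp [h0, Real.sqrt_sq_eq_abs, mul_comm]
  calc ‖hy‖ = ‖(hy - h0) + h0‖ := by rw [sub_add_cancel]
    _ ≤ ‖hy - h0‖ + ‖h0‖ := norm_add_le _ _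
    _ ≤ K * ‖y‖ + |h 0| * √(Fintype.card ι) := by rw [hconst]; gcongr

theorem stmt_11_general {d : ℕ} (P : ℕ) (msz : ℕ → ℕ)
    (C1 : ℝ) (C3 : ℕ → ℝ)
    (θ : ℕ → ℝ) (hθ : ∀ p, θ p ∈ Set.Icc 0 (Real.pi / 2))
    (L : ℝ) (hL : 0 < L) (h : ℝ → ℝ) (hLip : LipschitzWith L.toNNReal h)
    (W0 : Matrix (Fin d) (Fin (msz 0)) ℝ)
    (W : (p : ℕ) → Matrix (Fin (msz p)) (Fin (msz (p + 1))) ℝ)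
    (hW0n : ∀ j, ‖colE W0 j‖ ≤ C3 0)
    (hW0ang : ∀ j k, j ≠ k → θ 0 ≤ rho (colE W0 j) (colE W0 k))
    (hWn : ∀ p j, ‖colE (W p) j‖ ≤ C3 (p + 1))
    (hWang : ∀ p j k, j ≠ k → θ (p + 1) ≤ rho (colE (W p) j) (colE (W p) k))
    (v : (p : ℕ) → EuclideanSpace ℝ (Fin d) → EuclideanSpace ℝ (Fin (msz p)))
    (hv0 : ∀ x j, v 0 x j = ∑ i, W0 i j * x i)
    (hvs : ∀ p x j, v (p + 1) x j = ∑ i, W p i j * h (v p x i))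
    (J : ℕ → ℝ)
    (hJ0 : J 0 = C1 ^ 2 * C3 0 ^ 2 * (((msz 0 : ℝ) - 1) * Real.cos (θ 0) + 1))
    (hJs : ∀ p, J (p + 1) =
      C3 (p + 1) ^ 2 * (((msz (p + 1) : ℝ) - 1) * Real.cos (θ (p + 1)) + 1) * L ^ 2 * J p
      + 2 * C3 (p + 1) ^ 2 * L * |h 0| * Real.sqrt (msz p)
          * (((msz (p + 1) : ℝ) - 1) * Real.cos (θ (p + 1)) + 1) * Real.sqrt (J p)
      + C3 (p + 1) ^ 2 * (((msz (p + 1) : ℝ) - 1) * Real.cos (θ (p + 1)) + 1)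
          * msz p * h 0 ^ 2) :
    ∀ x : EuclideanSpace ℝ (Fin d), ‖x‖ ≤ C1 → ∀ p ≤ P, ‖v p x‖ ^ 2 ≤ J p := by
  intro x hx
  suffices ∀ p, ‖v p x‖ ^ 2 ≤ J p from fun p _ => this p
  intro p
  induction p with
  | zero =>
    have hK := cast_sub_one_mul_cos_add_one_nonneg (msz 0) (hθ 0)
    calc ‖v 0 x‖ ^ 2 ≤ C3 0 ^ 2 * (((msz 0 : ℝ) - 1) * Real.cos (θ 0) + 1) * ‖x‖ ^ 2 :=
          norm_sq_le_of_forall_le_rho (hθ 0) hW0n hW0ang (hv0 x)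
      _ ≤ J 0 := by rw [hJ0, mul_comm (C1 ^ 2), mul_right_comm]; gcongr
  | succ p ih =>
    have hK := cast_sub_one_mul_cos_add_one_nonneg (msz (p + 1)) (hθ (p + 1))
    have hJ : 0 ≤ J p := (sq_nonneg _).trans ih
    have hvp : ‖v p x‖ ≤ √(J p) := Real.le_sqrt_of_sq_le ih
    have hh := hLip.norm_toLp_comp_le (v p x)
    rw [Real.coe_toNNReal L hL.le, Fintype.card_fin] at hh
    calc ‖v (p + 1) x‖ ^ 2
        ≤ C3 (p + 1) ^ 2 * (((msz (p + 1) : ℝ) - 1) * Real.cos (θ (p + 1)) + 1)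
            * ‖(WithLp.toLp 2 fun i => h (v p x i) : EuclideanSpace ℝ (Fin (msz p)))‖ ^ 2 :=
          norm_sq_le_of_forall_le_rho (hθ (p + 1)) (hWn p) (hWang p) (hvs p x)
      _ ≤ C3 (p + 1) ^ 2 * (((msz (p + 1) : ℝ) - 1) * Real.cos (θ (p + 1)) + 1)
            * (L * √(J p) + |h 0| * √(msz p)) ^ 2 := by
          gcongr
          exact hh.trans (by gcongr)
      _ = J (p + 1) := by
          rw [hJs, add_sq, mul_pow, mul_pow, Real.sq_sqrt hJ, Real.sq_sqrt (Nat.cast_nonneg _),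
            sq_abs]
          ring

/-- Output magnitude bound of a diversity-constrained multi-layer
network. Here `msz p = m^p`, `W0 = W^0 : ℝ^{d×m^0}`, and `W p = W^{p+1} : ℝ^{m^p×m^{p+1}}`;
each layer's columns are nonzero, have norm at most `C3^p` and pairwise nonobtuse angles
at least `θ^p`. The pre-activation outputs are `v^0(x) = (W^0)ᵀx`,
`v^{p+1}(x) = (W^{p+1})ᵀ(h∘v^p(x))`, and `J` is the recursively defined bound
(with `J^0 = C1²(C3^0)²((m^0−1)cos θ^0 + 1)` as the columns of `W^0` have norm ≤ `C3^0`).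
Then `‖v^p(x)‖₂² ≤ J^p` for all `‖x‖₂ ≤ C1` and `p ≤ P`. -/
theorem stmt_11 {d : ℕ} (P : ℕ) (hP : 1 ≤ P) (msz : ℕ → ℕ)
    (C1 : ℝ) (hC1 : 0 < C1) (C3 : ℕ → ℝ) (hC3 : ∀ p, 0 < C3 p)
    (θ : ℕ → ℝ) (hθ : ∀ p, θ p ∈ Set.Icc 0 (Real.pi / 2))
    (L : ℝ) (hL : 0 < L) (h : ℝ → ℝ) (hLip : LipschitzWith L.toNNReal h)
    (W0 : Matrix (Fin d) (Fin (msz 0)) ℝ)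
    (W : (p : ℕ) → Matrix (Fin (msz p)) (Fin (msz (p + 1))) ℝ)
    (hW0ne : ∀ j, colE W0 j ≠ 0)
    (hW0n : ∀ j, ‖colE W0 j‖ ≤ C3 0)
    (hW0ang : ∀ j k, j ≠ k → θ 0 ≤ rho (colE W0 j) (colE W0 k))
    (hWne : ∀ p j, colE (W p) j ≠ 0)
    (hWn : ∀ p j, ‖colE (W p) j‖ ≤ C3 (p + 1))
    (hWang : ∀ p j k, j ≠ k → θ (p + 1) ≤ rho (colE (W p) j) (colE (W p) k))
    (v : (p : ℕ) → EuclideanSpace ℝ (Fin d) → EuclideanSpace ℝ (Fin (msz p)))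
    (hv0 : ∀ x j, v 0 x j = ∑ i, W0 i j * x i)
    (hvs : ∀ p x j, v (p + 1) x j = ∑ i, W p i j * h (v p x i))
    (J : ℕ → ℝ)
    (hJ0 : J 0 = C1 ^ 2 * C3 0 ^ 2 * (((msz 0 : ℝ) - 1) * Real.cos (θ 0) + 1))
    (hJs : ∀ p, J (p + 1) =
      C3 (p + 1) ^ 2 * (((msz (p + 1) : ℝ) - 1) * Real.cos (θ (p + 1)) + 1) * L ^ 2 * J p
      + 2 * C3 (p + 1) ^ 2 * L * |h 0| * Real.sqrt (msz p)
          * (((msz (p + 1) : ℝ) - 1) * Real.cos (θ (p + 1)) + 1) * Real.sqrt (J p)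
      + C3 (p + 1) ^ 2 * (((msz (p + 1) : ℝ) - 1) * Real.cos (θ (p + 1)) + 1)
          * msz p * h 0 ^ 2) :
    ∀ x : EuclideanSpace ℝ (Fin d), ‖x‖ ≤ C1 → ∀ p ≤ P, ‖v p x‖ ^ 2 ≤ J p :=
  stmt_11_general P msz C1 C3 θ hθ L hL h hLip W0 W hW0n hW0ang hWn hWang v hv0 hvs J hJ0 hJs
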